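/- Under a regular discrete choice model with distinct revenues r_1 < ... < r_k, the revenue-ordered assortments strategy achieves revenue at least OPT / (∑_{i=1}^{k} (r_i − r_{i−1})/r_i) (with r_0 := 0), and hence at least OPT/(1 + ln(r_k/r_1)). -/

import Mathlib

/-!
Sort the revenues `rv 1 < ⋯ < rv k` and write each revenue as a telescoping sum,
`r x = ∑_{rv j ≤ r x} (rv j - rv (j-1))`. This splits the revenue of any assortment `S` into
layers: `R(S) = ∑_j (rv j - rv (j-1)) q_j`, where `q_j` is the probability of buying from `S` a
product of revenue at least `rv j`. By regularity, `q_j` is at most the purchase probability of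
the revenue-ordered assortment `S_j = {x | rv j ≤ r x}`, which in turn is at most
`R(S_j) / rv j ≤ max_i R(S_i) / rv j`. Summing over `j` gives the first bound, and
`(a - b) / a ≤ log (a / b)` bounds the harmonic-type factor by `1 + log (rv k / rv 1)`.
-/

open Finset

theorem Finset.sum_Icc_one_sub_pred {M : Type*} [AddCommGroup M] (f : ℕ → M) (t : ℕ) :
    ∑ j ∈ Icc 1 t, (f j - f (j - 1)) = f t - f 0 := by
  induction t with
  | zero => simp
  | succ t ih =>
    rw [sum_Icc_succ_top (by omega), ih, Nat.add_sub_cancel]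
    abel

theorem Real.sub_div_le_log_div {a b : ℝ} (ha : 0 < a) (hb : 0 < b) :
    (a - b) / a ≤ Real.log (a / b) := by
  have h := Real.one_sub_inv_le_log_of_pos (div_pos ha hb)
  rwa [inv_div, ← div_self ha.ne', ← sub_div] at h

section Layers

variable {rv : ℕ → ℝ} {k : ℕ}

theorem sum_sub_pred_div_le_one_add_log (hrv0 : rv 0 = 0) (hpos : ∀ j ∈ Icc 1 k, 0 < rv j)
    (hk : 1 ≤ k) :
    ∑ j ∈ Icc 1 k, (rv j - rv (j - 1)) / rv j ≤ 1 + Real.log (rv k / rv 1) := by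
  induction k, hk using Nat.le_induction with
  | base =>
    have h1 : rv 1 ≠ 0 := (hpos 1 (by simp)).ne'
    simp [hrv0, h1]
  | succ k hk ih =>
    have hpos' : ∀ j ∈ Icc 1 k, 0 < rv j := fun j hj =>
      hpos j (Icc_subset_Icc_right k.le_succ hj)
    have h1 := hpos 1 (by simp)
    have hk0 := hpos k (mem_Icc.2 ⟨hk, k.le_succ⟩)
    have hk1 := hpos (k + 1) (by simp)
    calc ∑ j ∈ Icc 1 (k + 1), (rv j - rv (j - 1)) / rv j
        = ∑ j ∈ Icc 1 k, (rv j - rv (j - 1)) / rv j + (rv (k + 1) - rv k) / rv (k + 1) := by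
          rw [sum_Icc_succ_top (by omega), Nat.add_sub_cancel]
      _ ≤ 1 + Real.log (rv k / rv 1) + Real.log (rv (k + 1) / rv k) :=
          add_le_add (ih hpos') (Real.sub_div_le_log_div hk1 hk0)
      _ = 1 + Real.log (rv (k + 1) / rv 1) := by
          rw [add_assoc, ← Real.log_mul (by positivity) (by positivity),
            mul_comm, div_mul_div_cancel₀ hk0.ne']

theorem sum_filter_sub_pred_eq (hrv0 : rv 0 = 0) (hmono : StrictMonoOn rv (Set.Icc 1 k))
    {t : ℕ} (ht : t ∈ Icc 1 k) :
    ∑ j ∈ Icc 1 k with rv j ≤ rv t, (rv j - rv (j - 1)) = rv t := by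
  have ht' : t ∈ Set.Icc 1 k := by simpa using ht
  have hfilter : {j ∈ Icc 1 k | rv j ≤ rv t} = Icc 1 t := by
    ext j
    simp only [mem_filter, mem_Icc]
    constructor
    · rintro ⟨hj, hle⟩
      exact ⟨hj.1, (hmono.le_iff_le hj ht').1 hle⟩
    · rintro ⟨h1, hjt⟩
      have hj : j ∈ Set.Icc 1 k := ⟨h1, hjt.trans (mem_Icc.1 ht).2⟩
      exact ⟨hj, (hmono.le_iff_le hj ht').2 hjt⟩
  rw [hfilter, sum_Icc_one_sub_pred, hrv0, sub_zero]

theorem sub_pred_nonneg (hrv0 : rv 0 = 0) (hmono : StrictMonoOn rv (Set.Icc 1 k))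
    (hpos : ∀ j ∈ Icc 1 k, 0 < rv j) {j : ℕ} (hj : j ∈ Icc 1 k) :
    0 ≤ rv j - rv (j - 1) := by
  obtain ⟨hj1, hjk⟩ := mem_Icc.1 hj
  rcases hj1.eq_or_lt with rfl | hj1
  · simpa [hrv0] using (hpos 1 hj).le
  · exact sub_nonneg.2 ((hmono.le_iff_le ⟨by omega, by omega⟩ ⟨hj1.le, hjk⟩).2 (by omega))

theorem sum_mul_eq_sum_layers {ι : Type*} (hrv0 : rv 0 = 0)
    (hmono : StrictMonoOn rv (Set.Icc 1 k)) {s : Finset ι} (w r : ι → ℝ)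
    (hvals : ∀ x ∈ s, r x ∈ (Icc 1 k).image rv) :
    ∑ x ∈ s, w x * r x =
      ∑ j ∈ Icc 1 k, (rv j - rv (j - 1)) * ∑ x ∈ s with rv j ≤ r x, w x := by
  simp_rw [mul_sum, sum_filter]
  rw [sum_comm]
  refine sum_congr rfl fun x hx => ?_
  obtain ⟨t, ht, hrt⟩ := mem_image.1 (hvals x hx)
  rw [← sum_filter, ← sum_mul, ← hrt, sum_filter_sub_pred_eq hrv0 hmono ht, mul_comm]

end Layers

section ChoiceModel

variable {ι : Type*} (P : ι → Finset ι → ℝ) (r : ι → ℝ)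

noncomputable def revenue (S : Finset ι) : ℝ := ∑ x ∈ S, P x S * r x

noncomputable def revenueOrdered [Fintype ι] (c : ℝ) : Finset ι := {x | c ≤ r x}

variable {P r}

theorem revenue_nonneg (hr : ∀ x, 0 ≤ r x) (h_nonneg : ∀ x S, 0 ≤ P x S) (S : Finset ι) :
    0 ≤ revenue P r S :=
  sum_nonneg fun x _ => mul_nonneg (h_nonneg x S) (hr x)

theorem mul_sum_le_revenue {S : Finset ι} {c : ℝ} (h_nonneg : ∀ x S, 0 ≤ P x S)
    (hc : ∀ x ∈ S, c ≤ r x) :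
    c * ∑ x ∈ S, P x S ≤ revenue P r S := by
  rw [mul_sum]
  exact sum_le_sum fun x hx => by
    rw [mul_comm]
    exact mul_le_mul_of_nonneg_left (hc x hx) (h_nonneg x S)

theorem sum_le_sum_of_regular (h_reg : ∀ S S' : Finset ι, S ⊆ S' → ∀ x ∈ S, P x S' ≤ P x S)
    (h_reg0 : ∀ S S' : Finset ι, S ⊆ S' → 1 - ∑ x ∈ S', P x S' ≤ 1 - ∑ x ∈ S, P x S)
    {T S U : Finset ι} (hTS : T ⊆ S) (hTU : T ⊆ U) :
    ∑ x ∈ T, P x S ≤ ∑ x ∈ U, P x U :=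
  calc ∑ x ∈ T, P x S ≤ ∑ x ∈ T, P x T := sum_le_sum fun x hx => h_reg T S hTS x hx
    _ ≤ ∑ x ∈ U, P x U := by linarith [h_reg0 T U hTU]

theorem exists_revenue_le_mul_revenueOrdered [Fintype ι] (h_nonneg : ∀ x S, 0 ≤ P x S)
    (h_reg : ∀ S S' : Finset ι, S ⊆ S' → ∀ x ∈ S, P x S' ≤ P x S)
    (h_reg0 : ∀ S S' : Finset ι, S ⊆ S' → 1 - ∑ x ∈ S', P x S' ≤ 1 - ∑ x ∈ S, P x S)
    {rv : ℕ → ℝ} {k : ℕ} (hk : 1 ≤ k) (hrv0 : rv 0 = 0) (hmono : StrictMonoOn rv (Set.Icc 1 k))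
    (hpos : ∀ j ∈ Icc 1 k, 0 < rv j) (hvals : ∀ x, r x ∈ (Icc 1 k).image rv) (S : Finset ι) :
    ∃ i ∈ Icc 1 k, revenue P r S ≤
      (∑ j ∈ Icc 1 k, (rv j - rv (j - 1)) / rv j) * revenue P r (revenueOrdered r (rv i)) := by
  obtain ⟨i, hi, hmax⟩ := exists_max_image (Icc 1 k)
    (fun j => revenue P r (revenueOrdered r (rv j))) ⟨1, by simpa using hk⟩
  refine ⟨i, hi, ?_⟩
  rw [revenue, sum_mul_eq_sum_layers hrv0 hmono _ _ fun x _ => hvals x, sum_mul]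
  refine sum_le_sum fun j hj => ?_
  have hq : ∑ x ∈ S with rv j ≤ r x, P x S ≤
      revenue P r (revenueOrdered r (rv i)) / rv j := by
    rw [le_div_iff₀ (hpos j hj), mul_comm]
    calc rv j * ∑ x ∈ S with rv j ≤ r x, P x S
        ≤ rv j * ∑ x ∈ revenueOrdered r (rv j), P x (revenueOrdered r (rv j)) := by
          refine mul_le_mul_of_nonneg_left ?_ (hpos j hj).le
          refine sum_le_sum_of_regular h_reg h_reg0 (filter_subset _ _) fun x hx => ?_
          simpa [revenueOrdered] using (mem_filter.1 hx).2
      _ ≤ revenue P r (revenueOrdered r (rv j)) :=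
          mul_sum_le_revenue h_nonneg fun x hx => by simpa [revenueOrdered] using hx
      _ ≤ revenue P r (revenueOrdered r (rv i)) := hmax j hj
  calc (rv j - rv (j - 1)) * ∑ x ∈ S with rv j ≤ r x, P x S
      ≤ (rv j - rv (j - 1)) * (revenue P r (revenueOrdered r (rv i)) / rv j) :=
        mul_le_mul_of_nonneg_left hq (sub_pred_nonneg hrv0 hmono hpos hj)
    _ = (rv j - rv (j - 1)) / rv j * revenue P r (revenueOrdered r (rv i)) := by ring

end ChoiceModel

open scoped Classical in
theorem stmt4_general {α : Type*} [Fintype α]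
    (P : α → Finset α → ℝ) (r : α → ℝ)
    (hr : ∀ x, 0 < r x)
    (h_nonneg : ∀ (x : α) (S : Finset α), 0 ≤ P x S)
    (h_reg : ∀ S S' : Finset α, S ⊆ S' → ∀ x ∈ S, P x S' ≤ P x S)
    (h_reg0 : ∀ S S' : Finset α, S ⊆ S' →
      1 - ∑ x ∈ S', P x S' ≤ 1 - ∑ x ∈ S, P x S)
    (k : ℕ) (hk : 1 ≤ k) (rv : ℕ → ℝ)
    (hrv0 : rv 0 = 0)
    (hrvmono : ∀ i j, 1 ≤ i → i < j → j ≤ k → rv i < rv j)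
    (hvals : Finset.univ.image r = (Finset.Icc 1 k).image rv) :
    ∀ S : Finset α, ∃ i ∈ Finset.Icc 1 k,
      (∑ x ∈ S, P x S * r x ≤
        (∑ j ∈ Finset.Icc 1 k, (rv j - rv (j - 1)) / rv j) *
          ∑ x ∈ Finset.univ.filter (fun x => rv i ≤ r x),
            P x (Finset.univ.filter (fun x => rv i ≤ r x)) * r x) ∧
      (∑ x ∈ S, P x S * r x ≤
        (1 + Real.log (rv k / rv 1)) *
          ∑ x ∈ Finset.univ.filter (fun x => rv i ≤ r x),
            P x (Finset.univ.filter (fun x => rv i ≤ r x)) * r x) := by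
  have hmono : StrictMonoOn rv (Set.Icc 1 k) := fun i hi j hj hij => hrvmono i j hi.1 hij hj.2
  have hr_mem : ∀ x, r x ∈ (Icc 1 k).image rv := fun x => hvals ▸ mem_image_of_mem r (mem_univ x)
  have hpos : ∀ j ∈ Icc 1 k, 0 < rv j := fun j hj => by
    obtain ⟨x, -, hx⟩ := mem_image.1 (hvals ▸ mem_image_of_mem rv hj)
    exact hx ▸ hr x
  intro S
  obtain ⟨i, hi, hS⟩ :=
    exists_revenue_le_mul_revenueOrdered h_nonneg h_reg h_reg0 hk hrv0 hmono hpos hr_mem S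
  refine ⟨i, hi, hS, hS.trans ?_⟩
  exact mul_le_mul_of_nonneg_right (sum_sub_pred_div_le_one_add_log hrv0 hpos hk)
    (revenue_nonneg (fun x => (hr x).le) h_nonneg _)

open scoped Classical in
/-- Under a regular discrete choice model whose revenue function takes exactly the
distinct values `rv 1 < ... < rv k`, some revenue-ordered assortment achieves
revenue at least `OPT / ∑_{i=1}^k (rvᵢ − rv_{i−1})/rvᵢ`, hence at least
`OPT / (1 + ln (rv k / rv 1))`. -/
theorem stmt4 {α : Type*} [Fintype α] [DecidableEq α]
    (P : α → Finset α → ℝ) (r : α → ℝ)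
    (hr : ∀ x, 0 < r x)
    (h_nonneg : ∀ (x : α) (S : Finset α), 0 ≤ P x S)
    (h_vanish : ∀ (x : α) (S : Finset α), x ∉ S → P x S = 0)
    (h_sum : ∀ S : Finset α, ∑ x ∈ S, P x S ≤ 1)
    (h_reg : ∀ S S' : Finset α, S ⊆ S' → ∀ x ∈ S, P x S' ≤ P x S)
    (h_reg0 : ∀ S S' : Finset α, S ⊆ S' →
      1 - ∑ x ∈ S', P x S' ≤ 1 - ∑ x ∈ S, P x S)
    (k : ℕ) (hk : 1 ≤ k) (rv : ℕ → ℝ)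
    (hrv0 : rv 0 = 0)
    (hrvmono : ∀ i j, 1 ≤ i → i < j → j ≤ k → rv i < rv j)
    (hvals : Finset.univ.image r = (Finset.Icc 1 k).image rv) :
    ∀ S : Finset α, ∃ i ∈ Finset.Icc 1 k,
      (∑ x ∈ S, P x S * r x ≤
        (∑ j ∈ Finset.Icc 1 k, (rv j - rv (j - 1)) / rv j) *
          ∑ x ∈ Finset.univ.filter (fun x => rv i ≤ r x),
            P x (Finset.univ.filter (fun x => rv i ≤ r x)) * r x) ∧
      (∑ x ∈ S, P x S * r x ≤
        (1 + Real.log (rv k / rv 1)) *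
          ∑ x ∈ Finset.univ.filter (fun x => rv i ≤ r x),
            P x (Finset.univ.filter (fun x => rv i ≤ r x)) * r x) :=
  stmt4_general P r hr h_nonneg h_reg h_reg0 k hk rv hrv0 hrvmono hvals
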